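/- arXiv:0810.3880 — 4 statements merged into one kernel-verified Lean document; each statement's English description precedes it below -/
import Mathlib

section
/- The function $f(x, y, z_1, \dots, z_n) = \log(xy - \sum_{i=1}^n z_i^2)$ is concave on the open convex set $\{(x,y,z) \in \mathbb{R}^{n+2} : x > 0,\ y > 0,\ xy - \sum_i z_i^2 > 0\}$. -/
/-!
The form `Q(x, y, z) = x y - ∑ zᵢ²` has Lorentzian signature, so on the cone where it is positive
it satisfies the reverse Cauchy–Schwarz inequality `√(Q p) √(Q q) ≤ B(p, q)` for its polar form `B`.
Expanding `Q (a p + b q)` then shows that `√Q` is concave on the cone, and `log Q = 2 log √Q` is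
concave as a monotone concave function of a positive concave one.
-/

open Finset

theorem ConcaveOn.log {E : Type*} [AddCommMonoid E] [Module ℝ E] {s : Set E} {f : E → ℝ}
    (hf : ConcaveOn ℝ s f) (hpos : ∀ x ∈ s, 0 < f x) :
    ConcaveOn ℝ s fun x => Real.log (f x) :=
  ⟨hf.1, fun x hx y hy _ _ ha hb hab =>
    (strictConcaveOn_log_Ioi.concaveOn.2 (hpos x hx) (hpos y hy) ha hb hab).trans <|
      Real.log_le_log (convex_Ioi (0 : ℝ) (hpos x hx) (hpos y hy) ha hb hab).out
        (hf.2 hx hy ha hb hab)⟩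

variable {ι : Type*} [Fintype ι]

def lorentzForm (p : ℝ × ℝ × (ι → ℝ)) : ℝ :=
  p.1 * p.2.1 - ∑ i, p.2.2 i ^ 2

noncomputable def lorentzPolar (p q : ℝ × ℝ × (ι → ℝ)) : ℝ :=
  (p.1 * q.2.1 + q.1 * p.2.1) / 2 - ∑ i, p.2.2 i * q.2.2 i

variable (ι) in
def lorentzCone : Set (ℝ × ℝ × (ι → ℝ)) :=
  {p | 0 < p.1 ∧ 0 < p.2.1 ∧ 0 < lorentzForm p}

theorem lorentzForm_smul_add_smul (a b : ℝ) (p q : ℝ × ℝ × (ι → ℝ)) :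
    lorentzForm (a • p + b • q) =
      a ^ 2 * lorentzForm p + 2 * a * b * lorentzPolar p q + b ^ 2 * lorentzForm q := by
  have hsum : ∑ i, (a * p.2.2 i + b * q.2.2 i) ^ 2 = a ^ 2 * ∑ i, p.2.2 i ^ 2
      + 2 * a * b * ∑ i, p.2.2 i * q.2.2 i + b ^ 2 * ∑ i, q.2.2 i ^ 2 := by
    simp only [mul_sum, ← sum_add_distrib]
    exact sum_congr rfl fun i _ => by ring
  simp only [lorentzForm, lorentzPolar, Prod.fst_add, Prod.snd_add, Prod.smul_fst,
    Prod.smul_snd, Pi.add_apply, Pi.smul_apply, smul_eq_mul]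
  linear_combination -hsum

theorem sqrt_mul_sqrt_le_lorentzPolar {p q : ℝ × ℝ × (ι → ℝ)} (hp : 0 < p.1) (hq : 0 < q.1)
    (hQp : 0 ≤ lorentzForm p) (hQq : 0 ≤ lorentzForm q) :
    √(lorentzForm p) * √(lorentzForm q) ≤ lorentzPolar p q := by
  set μ := p.1 / q.1
  have hμ : 0 < μ := div_pos hp hq
  -- The quadratic `t ↦ Q (p - t q)` is nonpositive at `t = μ`, where the first coordinate vanishes.
  have hdisc : lorentzForm p - 2 * μ * lorentzPolar p q + μ ^ 2 * lorentzForm q ≤ 0 := by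
    have hfst : ((1 : ℝ) • p + (-μ) • q).1 = 0 := by
      simp only [Prod.fst_add, Prod.smul_fst, smul_eq_mul, μ]
      field_simp
      ring
    have hnonpos : lorentzForm ((1 : ℝ) • p + (-μ) • q) ≤ 0 := by
      rw [lorentzForm, hfst, zero_mul, zero_sub, neg_nonpos]
      exact sum_nonneg fun i _ => sq_nonneg _
    rw [lorentzForm_smul_add_smul] at hnonpos
    linarith
  have hamgm : 2 * μ * (√(lorentzForm p) * √(lorentzForm q)) ≤
      lorentzForm p + μ ^ 2 * lorentzForm q := by
    nlinarith [Real.sq_sqrt hQp, Real.sq_sqrt hQq,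
      sq_nonneg (√(lorentzForm p) - μ * √(lorentzForm q))]
  exact le_of_mul_le_mul_left (hamgm.trans (by linarith)) (by positivity : (0 : ℝ) < 2 * μ)

theorem le_sqrt_lorentzForm_smul_add_smul {p q : ℝ × ℝ × (ι → ℝ)} (hp : 0 < p.1) (hq : 0 < q.1)
    (hQp : 0 ≤ lorentzForm p) (hQq : 0 ≤ lorentzForm q) {a b : ℝ} (ha : 0 ≤ a) (hb : 0 ≤ b) :
    a * √(lorentzForm p) + b * √(lorentzForm q) ≤ √(lorentzForm (a • p + b • q)) := by
  apply Real.le_sqrt_of_sq_le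
  rw [lorentzForm_smul_add_smul]
  have hpolar := sqrt_mul_sqrt_le_lorentzPolar hp hq hQp hQq
  nlinarith [Real.sq_sqrt hQp, Real.sq_sqrt hQq,
    mul_le_mul_of_nonneg_left hpolar (mul_nonneg ha hb)]

theorem convex_lorentzCone : Convex ℝ (lorentzCone ι) := by
  intro p hp q hq a b ha hb hab
  have hpos : 0 < a * √(lorentzForm p) + b * √(lorentzForm q) :=
    convex_Ioi (0 : ℝ) (Real.sqrt_pos.2 hp.2.2) (Real.sqrt_pos.2 hq.2.2) ha hb hab
  refine ⟨convex_Ioi (0 : ℝ) hp.1 hq.1 ha hb hab, convex_Ioi (0 : ℝ) hp.2.1 hq.2.1 ha hb hab, ?_⟩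
  exact Real.sqrt_pos.1 <| hpos.trans_le <|
    le_sqrt_lorentzForm_smul_add_smul hp.1 hq.1 hp.2.2.le hq.2.2.le ha hb

theorem concaveOn_sqrt_lorentzForm : ConcaveOn ℝ (lorentzCone ι) fun p => √(lorentzForm p) :=
  ⟨convex_lorentzCone, fun _ hp _ hq _ _ ha hb _ =>
    le_sqrt_lorentzForm_smul_add_smul hp.1 hq.1 hp.2.2.le hq.2.2.le ha hb⟩

theorem log_quadratic_concave (n : ℕ) :
    ConcaveOn ℝ
      {p : ℝ × ℝ × (Fin n → ℝ) |
        0 < p.1 ∧ 0 < p.2.1 ∧ 0 < p.1 * p.2.1 - ∑ i : Fin n, (p.2.2 i) ^ 2}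
      (fun p => Real.log (p.1 * p.2.1 - ∑ i : Fin n, (p.2.2 i) ^ 2)) := by
  have hlog := (concaveOn_sqrt_lorentzForm (ι := Fin n)).log fun p hp => Real.sqrt_pos.2 hp.2.2
  refine (hlog.smul zero_le_two).congr fun p hp => ?_
  change 2 * Real.log √(lorentzForm p) = Real.log (lorentzForm p)
  rw [Real.log_sqrt hp.2.2.le, mul_div_cancel₀ _ two_ne_zero]
end

section
/- Let $x, y, a, b > 0$ and $z, c \in \mathbb{R}^n$ satisfy $xy - |z|^2 = ab - |c|^2 > 0$. Then for every $s \in [0,1]$, $(sx + (1-s)a)(sy + (1-s)b) - |sz + (1-s)c|^2 \ge xy - |z|^2$. -/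
open Finset

theorem Q_segment_ineq (n : ℕ) (x y a b : ℝ) (z c : Fin n → ℝ)
    (hx : 0 < x) (hy : 0 < y) (ha : 0 < a) (hb : 0 < b)
    (heq : x * y - ∑ i, (z i) ^ 2 = a * b - ∑ i, (c i) ^ 2)
    (hpos : 0 < x * y - ∑ i, (z i) ^ 2) :
    ∀ s ∈ Set.Icc (0 : ℝ) 1,
      (s * x + (1 - s) * a) * (s * y + (1 - s) * b) -
          ∑ i, (s * z i + (1 - s) * c i) ^ 2 ≥
        x * y - ∑ i, (z i) ^ 2 := by
  intro s hs
  obtain ⟨hs0, hs1⟩ := hs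
  set P := ∑ i, (z i) ^ 2 with hP
  set R := ∑ i, (c i) ^ 2 with hR
  set I := ∑ i, z i * c i with hI
  have hPnn : 0 ≤ P := Finset.sum_nonneg fun i _ => sq_nonneg _
  have hRnn : 0 ≤ R := Finset.sum_nonneg fun i _ => sq_nonneg _
  have hCS : I ^ 2 ≤ P * R := by
    simpa [hP, hR, hI] using Finset.sum_mul_sq_le_sq_mul_sq Finset.univ z c
  have hPR : 2 * I ≤ P + R := by
    have h0 : (0:ℝ) ≤ ∑ i, (z i - c i) ^ 2 :=
      Finset.sum_nonneg fun i _ => sq_nonneg _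
    have hexp : ∑ i, (z i - c i) ^ 2 = P - 2 * I + R := by
      rw [Finset.sum_congr rfl (fun i _ => by ring :
        ∀ i ∈ Finset.univ, (z i - c i) ^ 2 = z i ^ 2 - 2 * (z i * c i) + c i ^ 2),
        Finset.sum_add_distrib, Finset.sum_sub_distrib, ← Finset.mul_sum]
    linarith [hexp ▸ h0]
  set Q := x * y - P with hQ
  have hab : a * b = R + Q := by rw [hQ]; linarith
  have hxy : x * y = P + Q := by rw [hQ]; ring
  -- key: x*b + a*y ≥ 2*I + 2*Q
  have key : 2 * I + 2 * Q ≤ x * b + a * y := by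
    rcases le_or_gt (2 * I + 2 * Q) 0 with h | h
    · nlinarith [mul_pos hx hb, mul_pos ha hy]
    · have hsq : (2 * I + 2 * Q) ^ 2 ≤ (x * b + a * y) ^ 2 := by
        nlinarith [sq_nonneg (x * b - a * y), hCS, hPR, hpos.le,
          mul_nonneg hpos.le (by linarith : 0 ≤ P + R - 2 * I)]
      nlinarith [mul_pos hx hb, mul_pos ha hy, hsq]
  have hexp2 : ∑ i, (s * z i + (1 - s) * c i) ^ 2
      = s ^ 2 * P + 2 * s * (1 - s) * I + (1 - s) ^ 2 * R := by
    rw [Finset.sum_congr rfl (fun i _ => by ring :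
      ∀ i ∈ Finset.univ, (s * z i + (1 - s) * c i) ^ 2 =
        s ^ 2 * z i ^ 2 + 2 * s * (1 - s) * (z i * c i) + (1 - s) ^ 2 * c i ^ 2),
      Finset.sum_add_distrib, Finset.sum_add_distrib, ← Finset.mul_sum, ← Finset.mul_sum,
      ← Finset.mul_sum]
  rw [hexp2]
  have hs1' : 0 ≤ 1 - s := by linarith
  nlinarith [mul_nonneg hs0 hs1', mul_nonneg (mul_nonneg hs0 hs1') (by linarith : 0 ≤ x * b + a * y - 2 * I - 2 * Q), hpos, sq_nonneg (s - 1), sq_nonneg s]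
end

section
/- Let $x, y, a, b > 0$ and $z, c \in \mathbb{R}^n$ satisfy $xy - |z|^2 = ab - |c|^2 > 0$. Then $(x-a)(y-b) - |z-c|^2 \le 0$. -/
open Finset

theorem Q_difference_nonpos (n : ℕ) (x y a b : ℝ) (z c : Fin n → ℝ)
    (hx : 0 < x) (hy : 0 < y) (ha : 0 < a) (hb : 0 < b)
    (heq : x * y - ∑ i, (z i) ^ 2 = a * b - ∑ i, (c i) ^ 2)
    (hpos : 0 < x * y - ∑ i, (z i) ^ 2) :
    (x - a) * (y - b) - ∑ i, (z i - c i) ^ 2 ≤ 0 := by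
  set S := ∑ i, (z i) ^ 2 with hS
  set T := ∑ i, (c i) ^ 2 with hT
  set P := ∑ i, z i * c i with hP
  have hexp : ∑ i, (z i - c i) ^ 2 = S - 2 * P + T := by
    rw [hS, hT, hP, Finset.mul_sum, ← Finset.sum_sub_distrib, ← Finset.sum_add_distrib]
    apply Finset.sum_congr rfl
    intro i _
    ring
  have hSnn : 0 ≤ S := Finset.sum_nonneg fun i _ => sq_nonneg _
  have hTnn : 0 ≤ T := Finset.sum_nonneg fun i _ => sq_nonneg _
  have hCS : P ^ 2 ≤ S * T := Finset.sum_mul_sq_le_sq_mul_sq Finset.univ z c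
  rw [hexp]
  set Q := x * y - S with hQ
  have hQxy : Q ≤ x * y := by nlinarith
  have hQab : Q ≤ a * b := by nlinarith
  have hQ2 : Q * Q ≤ (x * y) * (a * b) :=
    mul_le_mul hQxy hQab (le_of_lt hpos) (by positivity)
  have hM : 2 * Q ≤ x * b + y * a := by
    nlinarith [sq_nonneg (x * b - y * a), hQ2, hpos, mul_pos hx hb, mul_pos hy ha]
  rcases le_or_gt ((x - a) * (y - b)) 0 with h | h
  · have hnn : 0 ≤ S - 2 * P + T := by
      rw [← hexp]; exact Finset.sum_nonneg fun i _ => sq_nonneg _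
    linarith
  · have hST : S * T ≤ ((x * b + y * a) / 2 - Q) ^ 2 := by
      have hSval : S = x * y - Q := by rw [hQ]; ring
      have hTval : T = a * b - Q := by rw [hQ]; linarith [heq]
      nlinarith [sq_nonneg (x * b - y * a), mul_pos hpos h]
    have hPM : P ≤ (x * b + y * a) / 2 - Q := by
      nlinarith [hCS, hST, hM, sq_nonneg P]
    nlinarith [hPM]
end

section
/- The function $h(x, y_1, \dots, y_n, z_1, \dots, z_n) = \log\left(x\left(\sum_{i=1}^n y_i\right) - \sum_{i=1}^n z_i^2\right)$ is concave on the set where $x > 0$, $\sum_i y_i > 0$, and $x\sum_i y_i - \sum_i z_i^2 > 0$. -/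
open Finset

private lemma key_div (a b x1 x2 z1 z2 : ℝ) (ha : 0 ≤ a) (hb : 0 ≤ b)
    (hx1 : 0 < x1) (hx2 : 0 < x2) (hd : 0 < a * x1 + b * x2) :
    (a * z1 + b * z2) ^ 2 / (a * x1 + b * x2) ≤ a * (z1 ^ 2 / x1) + b * (z2 ^ 2 / x2) := by
  rw [div_le_iff₀ hd,
    show a * (z1 ^ 2 / x1) + b * (z2 ^ 2 / x2) = (a * z1 ^ 2 * x2 + b * z2 ^ 2 * x1) / (x1 * x2) by
      field_simp,
    div_mul_eq_mul_div, le_div_iff₀ (mul_pos hx1 hx2)]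
  nlinarith [mul_nonneg (mul_nonneg ha hb) (sq_nonneg (z1 * x2 - z2 * x1))]

private lemma pos_comb {a b u v : ℝ} (ha : 0 ≤ a) (hb : 0 ≤ b) (hab : a + b = 1)
    (hu : 0 < u) (hv : 0 < v) : 0 < a * u + b * v := by
  rcases eq_or_lt_of_le ha with rfl | ha'
  · simp only [zero_add] at hab; simp [hab, hv]
  · nlinarith

private lemma g_ineq (n : ℕ) (a b x1 x2 : ℝ) (y1 y2 z1 z2 : Fin n → ℝ)
    (ha : 0 ≤ a) (hb : 0 ≤ b) (hx1 : 0 < x1) (hx2 : 0 < x2) (hd : 0 < a * x1 + b * x2) :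
    a * ((∑ i, y1 i) - ∑ i, (z1 i) ^ 2 / x1) + b * ((∑ i, y2 i) - ∑ i, (z2 i) ^ 2 / x2) ≤
      (∑ i, (a * y1 i + b * y2 i)) - ∑ i, (a * z1 i + b * z2 i) ^ 2 / (a * x1 + b * x2) := by
  have hy : ∑ i, (a * y1 i + b * y2 i) = a * ∑ i, y1 i + b * ∑ i, y2 i := by
    rw [sum_add_distrib, mul_sum, mul_sum]
  have hz : ∑ i, (a * z1 i + b * z2 i) ^ 2 / (a * x1 + b * x2) ≤
      a * ∑ i, (z1 i) ^ 2 / x1 + b * ∑ i, (z2 i) ^ 2 / x2 := by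
    rw [mul_sum, mul_sum, ← sum_add_distrib]
    exact sum_le_sum fun i _ => key_div a b x1 x2 (z1 i) (z2 i) ha hb hx1 hx2 hd
  rw [hy, show a * ((∑ i, y1 i) - ∑ i, (z1 i) ^ 2 / x1) + b * ((∑ i, y2 i) - ∑ i, (z2 i) ^ 2 / x2)
      = (a * ∑ i, y1 i + b * ∑ i, y2 i) - (a * ∑ i, (z1 i) ^ 2 / x1 + b * ∑ i, (z2 i) ^ 2 / x2) by ring]
  exact sub_le_sub_left hz _

theorem log_quadratic_sum_concave (n : ℕ) :
    ConcaveOn ℝ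
      {p : ℝ × (Fin n → ℝ) × (Fin n → ℝ) |
        0 < p.1 ∧ 0 < ∑ i, p.2.1 i ∧
          0 < p.1 * (∑ i, p.2.1 i) - ∑ i, (p.2.2 i) ^ 2}
      (fun p => Real.log (p.1 * (∑ i, p.2.1 i) - ∑ i, (p.2.2 i) ^ 2)) := by
  set S : Set (ℝ × (Fin n → ℝ) × (Fin n → ℝ)) :=
    {p | 0 < p.1 ∧ 0 < ∑ i, p.2.1 i ∧ 0 < p.1 * (∑ i, p.2.1 i) - ∑ i, (p.2.2 i) ^ 2} with hS
  set g : ℝ × (Fin n → ℝ) × (Fin n → ℝ) → ℝ :=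
    fun p => (∑ i, p.2.1 i) - ∑ i, (p.2.2 i) ^ 2 / p.1 with hg
  have hmulg : ∀ p : ℝ × (Fin n → ℝ) × (Fin n → ℝ), 0 < p.1 →
      p.1 * g p = p.1 * (∑ i, p.2.1 i) - ∑ i, (p.2.2 i) ^ 2 := by
    intro p hp
    simp only [hg, mul_sub]
    congr 1
    rw [mul_sum]
    exact Finset.sum_congr rfl fun i _ => by field_simp
  have hgpos : ∀ p ∈ S, 0 < g p := by
    intro p hp
    have h2 : p.1 * g p / p.1 = g p := mul_div_cancel_left₀ _ hp.1.ne'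
    rw [hmulg p hp.1] at h2
    rw [← h2]
    exact div_pos hp.2.2 hp.1
  have hgc : ∀ (a b : ℝ) (p q : ℝ × (Fin n → ℝ) × (Fin n → ℝ)), g (a • p + b • q) =
      (∑ i, (a * p.2.1 i + b * q.2.1 i)) -
        ∑ i, (a * p.2.2 i + b * q.2.2 i) ^ 2 / (a * p.1 + b * q.1) :=
    fun _ _ _ _ => rfl
  have hconv : Convex ℝ S := by
    intro p hp q hq a b ha hb hab
    have hx : (0:ℝ) < a * p.1 + b * q.1 := pos_comb ha hb hab hp.1 hq.1
    have hkey : a * g p + b * g q ≤ g (a • p + b • q) := by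
      rw [hgc]
      exact g_ineq n a b p.1 q.1 _ _ _ _ ha hb hp.1 hq.1 hx
    have hgcpos : 0 < g (a • p + b • q) :=
      lt_of_lt_of_le (pos_comb ha hb hab (hgpos p hp) (hgpos q hq)) hkey
    refine ⟨hx, ?_, ?_⟩
    · show 0 < ∑ i, (a • p + b • q).2.1 i
      have hsum : ∑ i, (a • p + b • q).2.1 i = a * (∑ i, p.2.1 i) + b * ∑ i, q.2.1 i := by
        rw [show (∑ i, (a • p + b • q).2.1 i) = ∑ i, (a * p.2.1 i + b * q.2.1 i) from rfl,
          Finset.sum_add_distrib, Finset.mul_sum, Finset.mul_sum]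
      rw [hsum]
      exact pos_comb ha hb hab hp.2.1 hq.2.1
    · show 0 < (a • p + b • q).1 * (∑ i, (a • p + b • q).2.1 i) - ∑ i, ((a • p + b • q).2.2 i) ^ 2
      rw [← hmulg _ hx]
      exact mul_pos hx hgcpos
  refine ⟨hconv, ?_⟩
  intro p hp q hq a b ha hb hab
  have hc := hconv hp hq ha hb hab
  have hx : (0:ℝ) < a * p.1 + b * q.1 := pos_comb ha hb hab hp.1 hq.1
  have hkey : a * g p + b * g q ≤ g (a • p + b • q) := by
    rw [hgc]
    exact g_ineq n a b p.1 q.1 _ _ _ _ ha hb hp.1 hq.1 hx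
  have hlog : ∀ r ∈ S, Real.log (r.1 * (∑ i, r.2.1 i) - ∑ i, (r.2.2 i) ^ 2) =
      Real.log r.1 + Real.log (g r) := by
    intro r hr
    rw [← hmulg r hr.1, Real.log_mul hr.1.ne' (hgpos r hr).ne']
  simp only [smul_eq_mul]
  rw [hlog p hp, hlog q hq, hlog _ hc]
  have l1 : a * Real.log p.1 + b * Real.log q.1 ≤ Real.log ((a • p + b • q).1) := by
    have h1 := strictConcaveOn_log_Ioi.concaveOn.2 (Set.mem_Ioi.2 hp.1) (Set.mem_Ioi.2 hq.1) ha hb hab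
    simpa [smul_eq_mul] using h1
  have l2 : a * Real.log (g p) + b * Real.log (g q) ≤ Real.log (g (a • p + b • q)) := by
    have h1 := strictConcaveOn_log_Ioi.concaveOn.2 (Set.mem_Ioi.2 (hgpos p hp))
      (Set.mem_Ioi.2 (hgpos q hq)) ha hb hab
    simp only [smul_eq_mul] at h1
    exact h1.trans (Real.log_le_log (pos_comb ha hb hab (hgpos p hp) (hgpos q hq)) hkey)
  linarith
end
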